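/- Let p be a nonzero polynomial in n variables with integer coefficients and zero constant term, viewed as a polynomial function on ℂⁿ. Then the variety V(p) ⊆ ℂⁿ is allowable if and only if there exist a nonzero integer m and a nonempty finite list of factors, each equal to x_i, x_i + x_j, or x_i − x_j for some indices i, j, such that p equals m times the product of these factors. -/

import Mathlib

/-- An allowable hyperplane in `Kⁿ` is one of `{x : x i = 0}`, `{x : x i + x j = 0}`,
`{x : x i - x j = 0}`. -/
def IsAllowableHyperplane {K : Type*} [Ring K] {n : ℕ} (H : Set (Fin n → K)) : Prop :=
  (∃ i : Fin n, H = {x | x i = 0}) ∨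
  (∃ i j : Fin n, H = {x | x i + x j = 0}) ∨
  (∃ i j : Fin n, H = {x | x i - x j = 0})

/-- A set is allowable if it is a finite union of finite (nonempty) intersections of
allowable hyperplanes. -/
def IsAllowable {K : Type*} [Ring K] {n : ℕ} (A : Set (Fin n → K)) : Prop :=
  ∃ 𝒢 : Finset (Finset (Set (Fin n → K))),
    (∀ G ∈ 𝒢, G.Nonempty ∧ ∀ H ∈ G, IsAllowableHyperplane H) ∧
    A = ⋃ G ∈ 𝒢, ⋂₀ (G : Set (Set (Fin n → K)))

/-- A basic factor is `x i`, `x i + x j`, or `x i - x j`. -/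
def IsBasicFactor {R : Type*} [CommRing R] {n : ℕ} (q : MvPolynomial (Fin n) R) : Prop :=
  (∃ i : Fin n, q = MvPolynomial.X i) ∨
  (∃ i j : Fin n, q = MvPolynomial.X i + MvPolynomial.X j) ∨
  (∃ i j : Fin n, q = MvPolynomial.X i - MvPolynomial.X j)

/-! Over `ℂ`, every intersection of allowable hyperplanes contained in `V(p)` lies in one of the
hyperplanes `x i = 0`, `x i ± x j = 0` with `i ≠ j`, since the only other allowable hyperplane,
`x i - x i = 0`, is everything and `p ≠ 0`. So the product `r` of these linear forms vanishes on
`V(p)`, and the Nullstellensatz gives `p ∣ r ^ N` in `ℂ[x]`. The linear forms are prime, so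
unique factorisation writes `p` as a constant times a product of them. Each of them has leading
coefficient `±1` for any monomial order, which forces the constant to be an integer. -/

open MvPolynomial

namespace MvPolynomial

variable {R σ : Type*} [CommRing R]

theorem prime_X_sub_rename_subtype [IsDomain R] [DecidableEq σ] (i : σ)
    (q : MvPolynomial {j // j ≠ i} R) : Prime (X i - rename Subtype.val q) := by
  let e := (renameEquiv R (Equiv.optionSubtypeNe i).symm).trans (optionEquivLeft R _)
  have he : e (X i - rename Subtype.val q) = Polynomial.X - Polynomial.C q := by
    have hsome : (Equiv.optionSubtypeNe i).symm ∘ Subtype.val = some := by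
      funext j
      exact Equiv.optionSubtypeNe_symm_of_ne j.2
    have hC : optionEquivLeft R _ (rename some q) = Polynomial.C q := by
      induction q using MvPolynomial.induction_on with
      | C a => simp [optionEquivLeft_C]
      | add f g hf hg => simp [hf, hg]
      | mul_X f j hf => simp [hf, optionEquivLeft_X_some]
    simp [e, rename_rename, hsome, optionEquivLeft_X_none, hC]
  rw [← MulEquiv.prime_iff e.toMulEquiv]
  exact he ▸ Polynomial.prime_X_sub_C q

theorem prime_X_sub_X [IsDomain R] {i j : σ} (hij : i ≠ j) :
    Prime (X i - X j : MvPolynomial σ R) := by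
  classical
  simpa using prime_X_sub_rename_subtype (R := R) i (X ⟨j, hij.symm⟩)

theorem prime_X_add_X [IsDomain R] {i j : σ} (hij : i ≠ j) :
    Prime (X i + X j : MvPolynomial σ R) := by
  classical
  simpa using prime_X_sub_rename_subtype (R := R) i (-X ⟨j, hij.symm⟩)

theorem exists_dvd_pow_of_forall_eval_eq_zero {K : Type*} [Field K] [IsAlgClosed K] [Finite σ]
    {p r : MvPolynomial σ K} (h : ∀ x, eval x p = 0 → eval x r = 0) : ∃ N, p ∣ r ^ N := by
  have hr : r ∈ (Ideal.span {p}).radical := by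
    rw [← vanishingIdeal_zeroLocus_eq_radical (K := K), mem_vanishingIdeal_iff]
    exact fun x hx => h x ((mem_zeroLocus_iff.mp hx) p (Ideal.subset_span rfl))
  obtain ⟨N, hN⟩ := hr
  exact ⟨N, Ideal.mem_span_singleton.mp hN⟩

end MvPolynomial

namespace MonomialOrder

variable {R σ : Type*} [CommRing R] (m : MonomialOrder σ)

theorem toSyn_degree_X_ne [Nontrivial R] {i j : σ} (hij : i ≠ j) :
    m.toSyn (m.degree (X i : MvPolynomial σ R)) ≠ m.toSyn (m.degree (X j : MvPolynomial σ R)) := by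
  simpa [m.degree_X, Finsupp.single_left_inj] using hij

theorem isUnit_leadingCoeff_X_add_X [Nontrivial R] {i j : σ} (hij : i ≠ j) :
    IsUnit (m.leadingCoeff (X i + X j : MvPolynomial σ R) : R) := by
  rcases (m.toSyn_degree_X_ne (R := R) hij.symm).lt_or_gt with h | h
  · simp [m.leadingCoeff_add_of_lt h]
  · simp [add_comm (X i), m.leadingCoeff_add_of_lt h]

theorem isUnit_leadingCoeff_X_sub_X [Nontrivial R] {i j : σ} (hij : i ≠ j) :
    IsUnit (m.leadingCoeff (X i - X j : MvPolynomial σ R) : R) := by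
  rcases (m.toSyn_degree_X_ne (R := R) hij.symm).lt_or_gt with h | h
  · simp [m.leadingCoeff_sub_of_lt h]
  · rw [← neg_sub, m.leadingCoeff_neg, m.leadingCoeff_sub_of_lt h, m.leadingCoeff_X]
    exact isUnit_one.neg

theorem isUnit_leadingCoeff_prod {ι : Type*} {s : Finset ι} {P : ι → MvPolynomial σ R}
    (hP : ∀ i ∈ s, IsUnit (m.leadingCoeff (P i))) : IsUnit (m.leadingCoeff (∏ i ∈ s, P i)) := by
  rw [m.leadingCoeff_prod_of_regular fun i hi => (hP i hi).isRegular]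
  exact IsUnit.prod_iff.mpr hP

end MonomialOrder

theorem MvPolynomial.exists_eq_C_mul_of_map_eq_C_mul {R S σ : Type*} [CommRing R] [CommRing S]
    {φ : R →+* S} (hφ : Function.Injective φ) (m : MonomialOrder σ) {p F : MvPolynomial σ R}
    (hF : IsUnit (m.leadingCoeff F)) {c : S} (h : map φ p = C c * map φ F) :
    ∃ a, p = C a * F := by
  obtain ⟨u, hu⟩ := hF
  have hc : c = φ (p.coeff (m.degree F) * ↑u⁻¹) := by
    have hcoeff := congrArg (coeff (m.degree F)) h
    rw [coeff_map, coeff_C_mul, coeff_map, ← MonomialOrder.leadingCoeff, ← hu] at hcoeff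
    rw [map_mul, hcoeff, mul_assoc, ← map_mul, Units.mul_inv, map_one, mul_one]
  exact ⟨_, map_injective φ hφ (by rw [h, map_mul, map_C, hc])⟩

theorem UniqueFactorizationMonoid.exists_eq_mul_prod_of_dvd_prod_pow {α ι : Type*}
    [CommMonoidWithZero α] [UniqueFactorizationMonoid α] [Nontrivial α] [Fintype ι] {v : ι → α}
    (hv : ∀ i, Prime (v i)) {g : α} {N : ℕ} (hg : g ∣ (∏ i, v i) ^ N) :
    ∃ (u : αˣ) (k : ℕ) (f : Fin k → ι), g = u * ∏ l, v (f l) := by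
  induction g using UniqueFactorizationMonoid.induction_on_prime with
  | h₁ =>
    obtain ⟨i, -, hi⟩ := Finset.prod_eq_zero_iff.mp (eq_zero_of_pow_eq_zero (zero_dvd_iff.mp hg))
    exact ((hv i).ne_zero hi).elim
  | h₂ x hx => exact ⟨hx.unit, 0, Fin.elim0, by simp⟩
  | h₃ a q _ hq ih =>
    obtain ⟨u, k, f, rfl⟩ := ih ((dvd_mul_left _ _).trans hg)
    obtain ⟨i, -, hqi⟩ :=
      hq.exists_mem_finset_dvd (hq.dvd_of_dvd_pow ((dvd_mul_right _ _).trans hg))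
    obtain ⟨w, rfl⟩ := (hq.associated_of_dvd (hv i) hqi).symm
    refine ⟨u * w, k + 1, Fin.cons i f, ?_⟩
    simp only [Fin.prod_univ_succ, Fin.cons_zero, Fin.cons_succ, Units.val_mul]
    ac_rfl

-- Excluding `x i + x i = 2 * x i` and `x i - x i = 0` makes every factor prime, with leading
-- coefficient `±1`.
def IsProperBasicFactor {R σ : Type*} [CommRing R] (q : MvPolynomial σ R) : Prop :=
  (∃ i, q = X i) ∨ (∃ i j, i ≠ j ∧ q = X i + X j) ∨ (∃ i j, i ≠ j ∧ q = X i - X j)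

namespace IsProperBasicFactor

variable {R S σ : Type*} [CommRing R] [CommRing S] {q : MvPolynomial σ R}

theorem isBasicFactor {n : ℕ} {q : MvPolynomial (Fin n) R} (hq : IsProperBasicFactor q) :
    IsBasicFactor q := by
  rcases hq with ⟨i, rfl⟩ | ⟨i, j, -, rfl⟩ | ⟨i, j, -, rfl⟩
  exacts [Or.inl ⟨i, rfl⟩, Or.inr (Or.inl ⟨i, j, rfl⟩), Or.inr (Or.inr ⟨i, j, rfl⟩)]

theorem map (hq : IsProperBasicFactor q) (φ : R →+* S) : IsProperBasicFactor (map φ q) := by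
  rcases hq with ⟨i, rfl⟩ | ⟨i, j, hij, rfl⟩ | ⟨i, j, hij, rfl⟩
  exacts [Or.inl ⟨i, by simp⟩, Or.inr (Or.inl ⟨i, j, hij, by simp⟩),
    Or.inr (Or.inr ⟨i, j, hij, by simp⟩)]

theorem prime [IsDomain R] (hq : IsProperBasicFactor q) : Prime q := by
  rcases hq with ⟨i, rfl⟩ | ⟨i, j, hij, rfl⟩ | ⟨i, j, hij, rfl⟩
  exacts [X_prime, prime_X_add_X hij, prime_X_sub_X hij]

theorem isUnit_leadingCoeff [Nontrivial R] (hq : IsProperBasicFactor q) (m : MonomialOrder σ) :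
    IsUnit (m.leadingCoeff q) := by
  rcases hq with ⟨i, rfl⟩ | ⟨i, j, hij, rfl⟩ | ⟨i, j, hij, rfl⟩
  exacts [by simp, m.isUnit_leadingCoeff_X_add_X hij, m.isUnit_leadingCoeff_X_sub_X hij]

end IsProperBasicFactor

theorem IsAllowableHyperplane.eq_univ_or_eq_zeroSet {K : Type*} [CommRing K] [IsDomain K]
    [CharZero K] {n : ℕ} {H : Set (Fin n → K)} (hH : IsAllowableHyperplane H) :
    H = Set.univ ∨ ∃ b : MvPolynomial (Fin n) ℤ, IsProperBasicFactor b ∧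
      H = {x | eval x (map (Int.castRingHom K) b) = 0} := by
  rcases hH with ⟨i, rfl⟩ | ⟨i, j, rfl⟩ | ⟨i, j, rfl⟩
  · exact Or.inr ⟨X i, Or.inl ⟨i, rfl⟩, by simp⟩
  · obtain rfl | hij := eq_or_ne i j
    · exact Or.inr ⟨X i, Or.inl ⟨i, rfl⟩, by simp [add_self_eq_zero]⟩
    · exact Or.inr ⟨X i + X j, Or.inr (Or.inl ⟨i, j, hij, rfl⟩), by simp⟩
  · obtain rfl | hij := eq_or_ne i j
    · exact Or.inl (by simp)
    · exact Or.inr ⟨X i - X j, Or.inr (Or.inr ⟨i, j, hij, rfl⟩), by simp⟩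

theorem exists_isProperBasicFactor_sInter_subset {K : Type*} [CommRing K] [IsDomain K]
    [CharZero K] {n : ℕ} {p : MvPolynomial (Fin n) ℤ} (hp : p ≠ 0) {G : Set (Set (Fin n → K))}
    (hG : ∀ H ∈ G, IsAllowableHyperplane H)
    (hGp : ⋂₀ G ⊆ {x | eval x (map (Int.castRingHom K) p) = 0}) :
    ∃ b, IsProperBasicFactor b ∧ ⋂₀ G ⊆ {x | eval x (map (Int.castRingHom K) b) = 0} := by
  have : Infinite K := Infinite.of_injective _ Nat.cast_injective
  by_contra! hcon
  have huniv : ∀ H ∈ G, H = Set.univ := fun H hH =>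
    (hG H hH).eq_univ_or_eq_zeroSet.resolve_right fun ⟨b, hb, hHb⟩ =>
      hcon b hb (hHb ▸ Set.sInter_subset_of_mem hH)
  refine hp (map_injective _ (RingHom.injective_int (Int.castRingHom K)) (funext fun x => ?_))
  simpa using hGp (Set.mem_sInter.mpr fun H hH => huniv H hH ▸ Set.mem_univ x)

theorem IsBasicFactor.isAllowableHyperplane {K : Type*} [CommRing K] {n : ℕ}
    {q : MvPolynomial (Fin n) ℤ} (hq : IsBasicFactor q) :
    IsAllowableHyperplane {x : Fin n → K | eval x (map (Int.castRingHom K) q) = 0} := by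
  rcases hq with ⟨i, rfl⟩ | ⟨i, j, rfl⟩ | ⟨i, j, rfl⟩
  exacts [Or.inl ⟨i, by simp⟩, Or.inr (Or.inl ⟨i, j, by simp⟩), Or.inr (Or.inr ⟨i, j, by simp⟩)]

theorem isAllowable_iUnion {K : Type*} [Ring K] {n : ℕ} {ι : Type*} [Fintype ι]
    {H : ι → Set (Fin n → K)} (hH : ∀ i, IsAllowableHyperplane (H i)) :
    IsAllowable (⋃ i, H i) := by
  classical
  refine ⟨Finset.univ.image fun i => {H i}, ?_, ?_⟩
  · simp only [Finset.mem_image, Finset.mem_univ, true_and]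
    rintro _ ⟨i, rfl⟩
    exact ⟨Finset.singleton_nonempty _, by simpa using hH i⟩
  · ext x
    simp

theorem isAllowable_zeroSet_C_mul_prod {K : Type*} [CommRing K] [IsDomain K] [CharZero K]
    {n : ℕ} {ι : Type*} [Fintype ι] {m : ℤ} (hm : m ≠ 0) {f : ι → MvPolynomial (Fin n) ℤ}
    (hf : ∀ l, IsBasicFactor (f l)) :
    IsAllowable {x : Fin n → K | eval x (map (Int.castRingHom K) (C m * ∏ l, f l)) = 0} := by
  convert isAllowable_iUnion fun l => (hf l).isAllowableHyperplane (K := K)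
  ext x
  simp [Finset.prod_eq_zero_iff, hm]

theorem exists_eq_C_mul_prod_of_isAllowable {n : ℕ} {p : MvPolynomial (Fin n) ℤ} (hp : p ≠ 0)
    (hV : IsAllowable {x : Fin n → ℂ | eval x (map (Int.castRingHom ℂ) p) = 0}) :
    ∃ (m : ℤ) (k : ℕ) (f : Fin k → MvPolynomial (Fin n) ℤ),
      m ≠ 0 ∧ (∀ l, IsProperBasicFactor (f l)) ∧ p = C m * ∏ l, f l := by
  obtain ⟨𝒢, h𝒢, hV⟩ := hV
  have hcomponent (G : 𝒢) : ∃ b, IsProperBasicFactor b ∧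
      ⋂₀ ↑G.1 ⊆ {x : Fin n → ℂ | eval x (map (Int.castRingHom ℂ) b) = 0} :=
    exists_isProperBasicFactor_sInter_subset hp (h𝒢 G G.2).2
      fun x hx => by rw [hV]; exact Set.mem_iUnion₂.mpr ⟨G, G.2, hx⟩
  choose b hb hbG using hcomponent
  have hvanish (x : Fin n → ℂ) (hx : eval x (map (Int.castRingHom ℂ) p) = 0) :
      eval x (∏ G, map (Int.castRingHom ℂ) (b G)) = 0 := by
    obtain ⟨G, hG, hxG⟩ := Set.mem_iUnion₂.mp (hV ▸ hx : x ∈ ⋃ G ∈ 𝒢, ⋂₀ ↑G)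
    rw [map_prod]
    exact Finset.prod_eq_zero (Finset.mem_univ ⟨G, hG⟩) (hbG _ hxG)
  obtain ⟨N, hN⟩ := exists_dvd_pow_of_forall_eval_eq_zero hvanish
  obtain ⟨u, k, f, hpf⟩ := UniqueFactorizationMonoid.exists_eq_mul_prod_of_dvd_prod_pow
    (fun G => ((hb G).map _).prime) hN
  obtain ⟨c, -, hc⟩ := isUnit_iff_eq_C_of_isReduced.mp u.isUnit
  obtain ⟨m, rfl⟩ := exists_eq_C_mul_of_map_eq_C_mul (F := ∏ l, b (f l))
    (RingHom.injective_int _) MonomialOrder.lex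
    (MonomialOrder.isUnit_leadingCoeff_prod _ fun l _ => (hb (f l)).isUnit_leadingCoeff _)
    (by rw [hpf, hc, map_prod (map (Int.castRingHom ℂ))])
  exact ⟨m, k, fun l => b (f l), by rintro rfl; simp at hp, fun l => hb (f l), rfl⟩

/-- For a nonzero integer polynomial with zero constant term, viewed over `ℂⁿ`, the variety
is allowable iff the polynomial is a nonzero integer times a nonempty product of factors of
the form `x i`, `x i + x j`, `x i - x j`. -/
theorem stmt5 {n : ℕ} (p : MvPolynomial (Fin n) ℤ) (hp : p ≠ 0)
    (hconst : MvPolynomial.coeff 0 p = 0) :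
    IsAllowable {x : Fin n → ℂ |
        MvPolynomial.eval x (MvPolynomial.map (Int.castRingHom ℂ) p) = 0} ↔
    ∃ (m : ℤ) (k : ℕ) (f : Fin k → MvPolynomial (Fin n) ℤ),
      m ≠ 0 ∧ 1 ≤ k ∧ (∀ l : Fin k, IsBasicFactor (f l)) ∧
      p = MvPolynomial.C m * ∏ l : Fin k, f l := by
  constructor
  · intro hV
    obtain ⟨m, k, f, hm, hf, rfl⟩ := exists_eq_C_mul_prod_of_isAllowable hp hV
    refine ⟨m, k, f, hm, Nat.one_le_iff_ne_zero.mpr ?_, fun l => (hf l).isBasicFactor, rfl⟩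
    rintro rfl
    rw [Fin.prod_univ_zero, mul_one, coeff_zero_C] at hconst
    exact hm hconst
  · rintro ⟨m, k, f, hm, -, hf, rfl⟩
    exact isAllowable_zeroSet_C_mul_prod hm hf
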